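/- arXiv:2002.00495 — 4 statements merged into one kernel-verified Lean document; each statement's English description precedes it below -/
import Mathlib

section
/- Let d ≥ 1, let k ≥ 1 be an integer, let ζ > 0, β ≥ 0 and ρ̄ ∈ (0,1). Let A be a d×d real matrix with ‖A^t‖₂ ≤ β·ρ̄^t for every integer t ≥ 0, let v ∈ ℝ^d, let w ∈ ℝ^d with ‖w‖₂ = 1, and let s : ℕ → ℝ^d be k-periodic (s_{t+k} = s_t for all t). Set α := Σ_{t=0}^{k−1} (wᵀ s_t)². Then for every integer T' ≥ 0 such that ‖v‖₂²·β²·ρ̄^{2T'}/(1−ρ̄²) ≤ k·ζ/2 and 2·‖v‖₂·β·ρ̄^{T'}·√α/√(1−ρ̄²) ≤ k·ζ/2, one has |Σ_{t=T'}^{T'+k−1} (wᵀ(s_t + A^t·v))² − α| ≤ k·ζ. -/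
noncomputable section

open Matrix

/-- Euclidean norm of a real vector. -/
def enormR {n : Type*} [Fintype n] (v : n → ℝ) : ℝ :=
  Real.sqrt (∑ i, (v i) ^ 2)

/-- Spectral norm (ℓ² → ℓ² operator norm) of a real matrix. -/
def snormR {m n : Type*} [Fintype m] [Fintype n] (M : Matrix m n ℝ) : ℝ :=
  sSup {r : ℝ | ∃ v : n → ℝ, enormR v ≤ 1 ∧ r = enormR (M.mulVec v)}

/-!
Write the window sum as `∑ (a j + b j)²` with `a j = wᵀ s (T' + j)` and
`b j = wᵀ A^(T' + j) v`. By periodicity `∑ (a j)² = α`, and `|b j| ≤ ‖v‖ β ρ^T' ρ^j`, so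
`∑ (b j)²` is dominated by a geometric series. The deviation
`∑ (a j + b j)² - ∑ (a j)² = 2 ∑ a j b j + ∑ (b j)²` is then controlled by Cauchy–Schwarz,
and the two conditions on `T'` bound its two terms by `k ζ / 2` each.
-/

open scoped Matrix.Norms.L2Operator

section Norms

variable {m n : Type*} [Fintype m] [Fintype n]

lemma enormR_eq_norm (v : n → ℝ) : enormR v = ‖(EuclideanSpace.equiv n ℝ).symm v‖ := by
  simp [enormR, EuclideanSpace.norm_eq]

lemma abs_dotProduct_le_enormR_mul_enormR (w x : n → ℝ) :
    |w ⬝ᵥ x| ≤ enormR w * enormR x := by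
  rw [enormR_eq_norm, enormR_eq_norm]
  convert abs_real_inner_le_norm ((EuclideanSpace.equiv n ℝ).symm w)
    ((EuclideanSpace.equiv n ℝ).symm x) using 2
  simp [EuclideanSpace.inner_eq_star_dotProduct, dotProduct_comm]

lemma snormR_eq_l2_opNorm [DecidableEq n] (M : Matrix m n ℝ) : snormR M = ‖M‖ := by
  have hbound : ∀ v : n → ℝ, enormR v ≤ 1 → enormR (M *ᵥ v) ≤ ‖M‖ := fun v hv => by
    rw [enormR_eq_norm] at hv ⊢
    exact (M.l2_opNorm_mulVec _).trans (mul_le_of_le_one_right (norm_nonneg M) hv)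
  have hbdd : BddAbove {r : ℝ | ∃ v : n → ℝ, enormR v ≤ 1 ∧ r = enormR (M *ᵥ v)} := by
    refine ⟨‖M‖, ?_⟩
    rintro r ⟨v, hv, rfl⟩
    exact hbound v hv
  have hzero : (0 : ℝ) ∈ {r : ℝ | ∃ v : n → ℝ, enormR v ≤ 1 ∧ r = enormR (M *ᵥ v)} :=
    ⟨0, by simp [enormR], by simp [enormR]⟩
  refine le_antisymm (csSup_le ⟨0, hzero⟩ ?_) ?_
  · rintro r ⟨v, hv, rfl⟩
    exact hbound v hv
  · rw [Matrix.l2_opNorm_def]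
    refine ContinuousLinearMap.opNorm_le_of_unit_norm (le_csSup hbdd hzero) fun x hx => ?_
    refine le_csSup hbdd ⟨x.ofLp, ?_, ?_⟩
    · simp [enormR_eq_norm, hx]
    · simp [enormR_eq_norm, Matrix.toLpLin_apply]

lemma enormR_mulVec_le (M : Matrix m n ℝ) (x : n → ℝ) :
    enormR (M *ᵥ x) ≤ snormR M * enormR x := by
  classical
  rw [snormR_eq_l2_opNorm, enormR_eq_norm, enormR_eq_norm]
  exact M.l2_opNorm_mulVec _

end Norms

open Finset

theorem Function.Periodic.sum_range_add {M : Type*} [AddCancelCommMonoid M] {f : ℕ → M}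
    {k : ℕ} (hf : Function.Periodic f k) (T : ℕ) :
    ∑ j ∈ range k, f (T + j) = ∑ j ∈ range k, f j := by
  induction T with
  | zero => simp
  | succ T ih =>
    have hstep : ∑ j ∈ range k, f (T + 1 + j) + f T = ∑ j ∈ range k, f (T + j) + f T := by
      calc ∑ j ∈ range k, f (T + 1 + j) + f T = ∑ j ∈ range (k + 1), f (T + j) := by
            rw [sum_range_succ']
            simp only [add_assoc, add_comm 1, add_zero]
        _ = ∑ j ∈ range k, f (T + j) + f T := by
            rw [sum_range_succ, hf]
    rw [← ih]
    exact add_right_cancel hstep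

lemma abs_sum_add_sq_sub_sum_sq_le {ι : Type*} (s : Finset ι) (a b : ι → ℝ) :
    |∑ i ∈ s, (a i + b i) ^ 2 - ∑ i ∈ s, a i ^ 2| ≤
      2 * (√(∑ i ∈ s, a i ^ 2) * √(∑ i ∈ s, b i ^ 2)) + ∑ i ∈ s, b i ^ 2 := by
  have hexpand : ∑ i ∈ s, (a i + b i) ^ 2 - ∑ i ∈ s, a i ^ 2 =
      2 * ∑ i ∈ s, a i * b i + ∑ i ∈ s, b i ^ 2 := by
    rw [← sum_sub_distrib, mul_sum, ← sum_add_distrib]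
    exact sum_congr rfl fun i _ => by ring
  have hcs : |∑ i ∈ s, a i * b i| ≤ √(∑ i ∈ s, a i ^ 2) * √(∑ i ∈ s, b i ^ 2) := by
    refine abs_le.2 ⟨?_, Real.sum_mul_le_sqrt_mul_sqrt s a b⟩
    have := Real.sum_mul_le_sqrt_mul_sqrt s (-a) b
    simp only [Pi.neg_apply, neg_mul, sum_neg_distrib, neg_sq] at this
    linarith
  rw [hexpand]
  calc |2 * ∑ i ∈ s, a i * b i + ∑ i ∈ s, b i ^ 2|
      ≤ 2 * |∑ i ∈ s, a i * b i| + ∑ i ∈ s, b i ^ 2 := by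
        refine (abs_add_le _ _).trans ?_
        rw [abs_mul, abs_two, abs_of_nonneg (sum_nonneg fun i _ => sq_nonneg (b i))]
    _ ≤ _ := by gcongr

lemma sum_range_sq_le_of_abs_le_geom {b : ℕ → ℝ} {C ρ : ℝ} (hρ0 : 0 ≤ ρ) (hρ1 : ρ < 1)
    (hb : ∀ j, |b j| ≤ C * ρ ^ j) (k : ℕ) :
    ∑ j ∈ range k, b j ^ 2 ≤ C ^ 2 / (1 - ρ ^ 2) :=
  calc ∑ j ∈ range k, b j ^ 2 ≤ ∑ j ∈ range k, C ^ 2 * (ρ ^ 2) ^ j := by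
        refine sum_le_sum fun j _ => ?_
        rw [← pow_mul, mul_comm 2 j, pow_mul, ← mul_pow, ← sq_abs]
        exact pow_le_pow_left₀ (abs_nonneg _) (hb j) 2
    _ = C ^ 2 * ∑ j ∈ Ico 0 k, (ρ ^ 2) ^ j := by rw [mul_sum, range_eq_Ico]
    _ ≤ C ^ 2 * ((ρ ^ 2) ^ 0 / (1 - ρ ^ 2)) := by
        gcongr
        exact geom_sum_Ico_le_of_lt_one (sq_nonneg ρ) (pow_lt_one₀ hρ0 hρ1 two_ne_zero)
    _ = C ^ 2 / (1 - ρ ^ 2) := by ring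

lemma abs_dotProduct_pow_mulVec_le {n : Type*} [Fintype n] [DecidableEq n] {A : Matrix n n ℝ}
    {β ρ : ℝ} (hA : ∀ t : ℕ, snormR (A ^ t) ≤ β * ρ ^ t) (v : n → ℝ) {w : n → ℝ}
    (hw : enormR w = 1) (t : ℕ) : |w ⬝ᵥ (A ^ t) *ᵥ v| ≤ enormR v * β * ρ ^ t :=
  calc |w ⬝ᵥ (A ^ t) *ᵥ v| ≤ enormR w * enormR ((A ^ t) *ᵥ v) :=
        abs_dotProduct_le_enormR_mul_enormR _ _
    _ ≤ 1 * (snormR (A ^ t) * enormR v) := by rw [hw]; gcongr; exact enormR_mulVec_le _ _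
    _ ≤ enormR v * β * ρ ^ t := by
        rw [one_mul, mul_comm, mul_assoc]
        exact mul_le_mul_of_nonneg_left (hA t) (Real.sqrt_nonneg _)

theorem stmt5_general {d : ℕ} (k : ℕ) (ζ β ρ : ℝ)
    (hβ : 0 ≤ β) (hρ0 : 0 < ρ) (hρ1 : ρ < 1)
    (A : Matrix (Fin d) (Fin d) ℝ)
    (hA : ∀ t : ℕ, snormR (A ^ t) ≤ β * ρ ^ t)
    (v w : Fin d → ℝ) (hw : enormR w = 1)
    (s : ℕ → Fin d → ℝ) (hper : ∀ t, s (t + k) = s t) :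
    ∀ T' : ℕ,
      enormR v ^ 2 * β ^ 2 * ρ ^ (2 * T') / (1 - ρ ^ 2) ≤ k * ζ / 2 →
      2 * enormR v * β * ρ ^ T' *
          Real.sqrt (∑ t ∈ Finset.range k, (dotProduct w (s t)) ^ 2) /
          Real.sqrt (1 - ρ ^ 2) ≤ k * ζ / 2 →
      |(∑ j ∈ Finset.range k,
          (dotProduct w (s (T' + j) + (A ^ (T' + j)).mulVec v)) ^ 2) -
        ∑ t ∈ Finset.range k, (dotProduct w (s t)) ^ 2| ≤ k * ζ := by
  intro T' hquad hcross
  set C := enormR v * β * ρ ^ T'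
  have hC : 0 ≤ C := mul_nonneg (mul_nonneg (Real.sqrt_nonneg _) hβ) (pow_nonneg hρ0.le _)
  have htransient : ∀ j, |w ⬝ᵥ (A ^ (T' + j)) *ᵥ v| ≤ C * ρ ^ j := fun j =>
    (abs_dotProduct_pow_mulVec_le hA v hw _).trans_eq (by rw [pow_add]; ring)
  have hB := sum_range_sq_le_of_abs_le_geom hρ0.le hρ1 htransient k
  have hsqrtB : √(∑ j ∈ range k, (w ⬝ᵥ (A ^ (T' + j)) *ᵥ v) ^ 2) ≤ C / √(1 - ρ ^ 2) := by
    rw [← Real.sqrt_sq hC, ← Real.sqrt_div' _ (sub_nonneg.2 (pow_le_one₀ hρ0.le hρ1.le))]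
    exact Real.sqrt_le_sqrt hB
  have hwindow : ∑ j ∈ range k, (w ⬝ᵥ s (T' + j)) ^ 2 = ∑ t ∈ range k, (w ⬝ᵥ s t) ^ 2 :=
    (Function.Periodic.comp hper fun x => (w ⬝ᵥ x) ^ 2).sum_range_add T'
  simp only [dotProduct_add]
  rw [← hwindow]
  calc _ ≤ _ := abs_sum_add_sq_sub_sum_sq_le (range k) _ _
    _ ≤ 2 * (√(∑ j ∈ range k, (w ⬝ᵥ s (T' + j)) ^ 2) * (C / √(1 - ρ ^ 2))) +
          C ^ 2 / (1 - ρ ^ 2) := by gcongr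
    _ = 2 * enormR v * β * ρ ^ T' * √(∑ t ∈ range k, (w ⬝ᵥ s t) ^ 2) / √(1 - ρ ^ 2) +
          enormR v ^ 2 * β ^ 2 * ρ ^ (2 * T') / (1 - ρ ^ 2) := by rw [hwindow]; ring
    _ ≤ k * ζ / 2 + k * ζ / 2 := add_le_add hcross hquad
    _ = k * ζ := by ring

/-- **Transient lemma.**  If `s` is `k`-periodic, `‖A^t‖₂ ≤ β·ρ̄^t`, and the burn-in
conditions on `T'` hold, then the window power of `t ↦ s_t + A^t·v` in direction `w` over
`[T', T'+k−1]` is within `k·ζ` of the steady-state window power `α = Σ_{t<k} (wᵀ s_t)²`. -/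
theorem stmt5 {d : ℕ} (hd : 1 ≤ d) (k : ℕ) (hk : 1 ≤ k) (ζ β ρ : ℝ)
    (hζ : 0 < ζ) (hβ : 0 ≤ β) (hρ0 : 0 < ρ) (hρ1 : ρ < 1)
    (A : Matrix (Fin d) (Fin d) ℝ)
    (hA : ∀ t : ℕ, snormR (A ^ t) ≤ β * ρ ^ t)
    (v w : Fin d → ℝ) (hw : enormR w = 1)
    (s : ℕ → Fin d → ℝ) (hper : ∀ t, s (t + k) = s t) :
    ∀ T' : ℕ,
      enormR v ^ 2 * β ^ 2 * ρ ^ (2 * T') / (1 - ρ ^ 2) ≤ k * ζ / 2 →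
      2 * enormR v * β * ρ ^ T' *
          Real.sqrt (∑ t ∈ Finset.range k, (dotProduct w (s t)) ^ 2) /
          Real.sqrt (1 - ρ ^ 2) ≤ k * ζ / 2 →
      |(∑ j ∈ Finset.range k,
          (dotProduct w (s (T' + j) + (A ^ (T' + j)).mulVec v)) ^ 2) -
        ∑ t ∈ Finset.range k, (dotProduct w (s t)) ^ 2| ≤ k * ζ :=
  stmt5_general k ζ β ρ hβ hρ0 hρ1 A hA v w hw s hper
end
end

section
/- Let d ≥ 1 and k ≥ 1 be integers, let γ > 0, and let λ₁,…,λ_d ∈ [0,1). Let Λ be the d×d real diagonal matrix with diagonal entries λᵢ, set S := Σ_{i=1}^d (1−λᵢ²)/(1−λᵢ^{2k}) and c := γ²/S. Then: (i) for every d×d real symmetric positive-semidefinite matrix Σ with trace(Σ) ≤ γ², λmin(Σ_{t=0}^{k−1} Λ^t·Σ·Λ^t) ≤ c; and (ii) the diagonal matrix Σ* with entries (Σ*)_{jj} := c·(1−λⱼ²)/(1−λⱼ^{2k}) is positive semidefinite with trace(Σ*) = γ² and satisfies Σ_{t=0}^{k−1} Λ^t·Σ*·Λ^t = c·I, so the bound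 in (i) is attained. -/
/-! With `q i := ∑_{t<k} λᵢ^{2t} = (1 - λᵢ^{2k}) / (1 - λᵢ²)`, conjugating by the diagonal `Λ^t`
multiplies the `(i,i)` entry by `λᵢ^{2t}`, so `N := ∑_{t<k} Λ^t Σ Λ^t` has diagonal `q i * Σ i i`.
Testing the Rayleigh quotient on the basis vectors gives `λmin(N) / q i ≤ Σ i i`, and summing
over `i` gives `λmin(N) * ∑ᵢ 1 / q i ≤ trace Σ ≤ γ²`. Equality is attained by `Σ* i i ∝ 1 / q i`,
for which `N` is a multiple of the identity. -/

noncomputable section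

open Matrix

/-- Smallest eigenvalue of a real symmetric matrix, as the infimum of the quadratic form
over unit vectors. -/
def lamMinR {d : ℕ} (N : Matrix (Fin d) (Fin d) ℝ) : ℝ :=
  ⨅ w : {w : Fin d → ℝ // enormR w = 1}, dotProduct w.1 (N.mulVec w.1)

open Finset

theorem div_one_sub_pow_eq_inv_geom_sum {K : Type*} [Field K] {x : K} (hx : x ≠ 1) (k : ℕ) :
    (1 - x) / (1 - x ^ k) = (∑ t ∈ range k, x ^ t)⁻¹ := by
  rw [geom_sum_eq hx, inv_div, ← neg_sub x, ← neg_sub (x ^ k), neg_div_neg_eq]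

section Sandwich

variable {n R : Type*} [Fintype n] [DecidableEq n]

theorem sum_diagonal_pow_mul_mul_diagonal_pow_apply [CommSemiring R] (l : n → R)
    (A : Matrix n n R) (k : ℕ) (i j : n) :
    (∑ t ∈ range k, diagonal l ^ t * A * diagonal l ^ t) i j =
      (∑ t ∈ range k, (l i * l j) ^ t) * A i j := by
  simp only [Matrix.sum_apply, diagonal_pow, mul_diagonal, diagonal_mul, Pi.pow_apply, sum_mul,
    mul_pow]
  exact sum_congr rfl fun t _ => by ring

theorem sum_diagonal_pow_mul_diagonal_mul_diagonal_pow [CommSemiring R] (l f : n → R) (k : ℕ) :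
    ∑ t ∈ range k, diagonal l ^ t * diagonal f * diagonal l ^ t =
      diagonal fun i => (∑ t ∈ range k, (l i ^ 2) ^ t) * f i := by
  ext i j
  rw [sum_diagonal_pow_mul_mul_diagonal_pow_apply]
  rcases eq_or_ne i j with rfl | hij
  · simp [sq]
  · simp [hij]

theorem Matrix.PosSemidef.sum_diagonal_pow_mul_mul_diagonal_pow [CommRing R] [PartialOrder R]
    [StarRing R] [TrivialStar R] [AddLeftMono R] {A : Matrix n n R} (hA : A.PosSemidef)
    (l : n → R) (k : ℕ) :
    (∑ t ∈ range k, diagonal l ^ t * A * diagonal l ^ t).PosSemidef := by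
  refine posSemidef_sum _ fun t _ => ?_
  have hself : (diagonal l ^ t)ᴴ = diagonal l ^ t := ((isHermitian_diagonal l).pow t).eq
  simpa only [hself] using hA.mul_mul_conjTranspose_same (diagonal l ^ t)

end Sandwich

section RayleighQuotient

variable {d : ℕ}

theorem enormR_single_one (j : Fin d) : enormR (Pi.single j (1 : ℝ)) = 1 := by
  rw [enormR, sum_eq_single j (fun i _ hi => by simp [hi]) (by simp)]
  simp

theorem Matrix.PosSemidef.lamMinR_le_apply_self {N : Matrix (Fin d) (Fin d) ℝ} (hN : N.PosSemidef)
    (j : Fin d) : lamMinR N ≤ N j j := by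
  have hbdd : BddBelow (Set.range fun w : {w : Fin d → ℝ // enormR w = 1} => w.1 ⬝ᵥ N *ᵥ w.1) :=
    ⟨0, by rintro _ ⟨w, rfl⟩; simpa using hN.dotProduct_mulVec_nonneg w.1⟩
  calc lamMinR N ≤ Pi.single j 1 ⬝ᵥ N *ᵥ Pi.single j 1 :=
        ciInf_le hbdd ⟨Pi.single j 1, enormR_single_one j⟩
    _ = N j j := by simp [mulVec_single, single_dotProduct]

theorem lamMinR_mul_sum_inv_geom_sum_le_trace {k : ℕ} (hk : 1 ≤ k)
    (lam : Fin d → ℝ) {Sig : Matrix (Fin d) (Fin d) ℝ} (hSig : Sig.PosSemidef) :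
    lamMinR (∑ t ∈ range k, diagonal lam ^ t * Sig * diagonal lam ^ t) *
        ∑ i, (∑ t ∈ range k, (lam i ^ 2) ^ t)⁻¹ ≤ Sig.trace := by
  rw [mul_sum, trace]
  refine sum_le_sum fun i _ => ?_
  have hq : 0 < ∑ t ∈ range k, (lam i ^ 2) ^ t := geom_sum_pos (sq_nonneg _) (by omega)
  have hNii : (∑ t ∈ range k, diagonal lam ^ t * Sig * diagonal lam ^ t) i i =
      (∑ t ∈ range k, (lam i ^ 2) ^ t) * Sig i i := by
    rw [sum_diagonal_pow_mul_mul_diagonal_pow_apply, sq]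
  rw [← div_eq_mul_inv, div_le_iff₀ hq, mul_comm, diag_apply, ← hNii]
  exact (hSig.sum_diagonal_pow_mul_mul_diagonal_pow lam k).lamMinR_le_apply_self i

end RayleighQuotient

theorem stmt12_general {d : ℕ} (hd : 1 ≤ d) (k : ℕ) (hk : 1 ≤ k) (γ : ℝ)
    (lam : Fin d → ℝ) (hlam0 : ∀ i, 0 ≤ lam i) (hlam1 : ∀ i, lam i < 1) :
    (∀ Sig : Matrix (Fin d) (Fin d) ℝ, Sig.PosSemidef → Sig.trace ≤ γ ^ 2 →
      lamMinR (∑ t ∈ Finset.range k,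
          (Matrix.diagonal lam) ^ t * Sig * (Matrix.diagonal lam) ^ t) ≤
        γ ^ 2 / ∑ i, (1 - lam i ^ 2) / (1 - lam i ^ (2 * k))) ∧
    (Matrix.diagonal (fun j =>
        (γ ^ 2 / ∑ i, (1 - lam i ^ 2) / (1 - lam i ^ (2 * k))) *
          ((1 - lam j ^ 2) / (1 - lam j ^ (2 * k))))).PosSemidef ∧
    (Matrix.diagonal (fun j =>
        (γ ^ 2 / ∑ i, (1 - lam i ^ 2) / (1 - lam i ^ (2 * k))) *
          ((1 - lam j ^ 2) / (1 - lam j ^ (2 * k))))).trace = γ ^ 2 ∧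
    (∑ t ∈ Finset.range k,
        (Matrix.diagonal lam) ^ t *
          Matrix.diagonal (fun j =>
            (γ ^ 2 / ∑ i, (1 - lam i ^ 2) / (1 - lam i ^ (2 * k))) *
              ((1 - lam j ^ 2) / (1 - lam j ^ (2 * k)))) *
          (Matrix.diagonal lam) ^ t) =
      (γ ^ 2 / ∑ i, (1 - lam i ^ 2) / (1 - lam i ^ (2 * k))) •
        (1 : Matrix (Fin d) (Fin d) ℝ) := by
  set q : Fin d → ℝ := fun i => ∑ t ∈ range k, (lam i ^ 2) ^ t
  have hq : ∀ i, 0 < q i := fun i => geom_sum_pos (sq_nonneg _) (by omega)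
  have hw : ∀ i, (1 - lam i ^ 2) / (1 - lam i ^ (2 * k)) = (q i)⁻¹ := fun i => by
    have hlam_sq : lam i ^ 2 ≠ 1 := by nlinarith [hlam0 i, hlam1 i]
    rw [pow_mul, div_one_sub_pow_eq_inv_geom_sum hlam_sq]
  simp only [hw]
  have hS : 0 < ∑ i, (q i)⁻¹ :=
    sum_pos (fun i _ => inv_pos.mpr (hq i)) ⟨⟨0, hd⟩, mem_univ _⟩
  refine ⟨fun Sig hSig htr => ?_, ?_, ?_, ?_⟩
  · rw [le_div_iff₀ hS]
    exact (lamMinR_mul_sum_inv_geom_sum_le_trace hk lam hSig).trans htr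
  · exact posSemidef_diagonal_iff.mpr fun j => by positivity
  · rw [trace_diagonal, ← mul_sum, div_mul_cancel₀ _ hS.ne']
  · rw [sum_diagonal_pow_mul_diagonal_mul_diagonal_pow, ← diagonal_one, ← diagonal_smul]
    congr 1
    funext j
    rw [Pi.smul_apply, smul_eq_mul, mul_one]
    exact (mul_comm _ _).trans (inv_mul_cancel_right₀ (hq j).ne' _)

/-- **Optimal noise excitation for a diagonal stable system.**
(i) Every PSD `Σ` with `trace(Σ) ≤ γ²` has
`λmin(Σ_{t<k} Λ^t·Σ·Λ^t) ≤ c := γ²/Σᵢ (1−λᵢ²)/(1−λᵢ^{2k})`; and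
(ii) the diagonal `Σ*` with entries `c·(1−λⱼ²)/(1−λⱼ^{2k})` is PSD with trace `γ²` and
achieves `Σ_{t<k} Λ^t·Σ*·Λ^t = c·I`. -/
theorem stmt12 {d : ℕ} (hd : 1 ≤ d) (k : ℕ) (hk : 1 ≤ k) (γ : ℝ) (hγ : 0 < γ)
    (lam : Fin d → ℝ) (hlam0 : ∀ i, 0 ≤ lam i) (hlam1 : ∀ i, lam i < 1) :
    (∀ Sig : Matrix (Fin d) (Fin d) ℝ, Sig.PosSemidef → Sig.trace ≤ γ ^ 2 →
      lamMinR (∑ t ∈ Finset.range k,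
          (Matrix.diagonal lam) ^ t * Sig * (Matrix.diagonal lam) ^ t) ≤
        γ ^ 2 / ∑ i, (1 - lam i ^ 2) / (1 - lam i ^ (2 * k))) ∧
    (Matrix.diagonal (fun j =>
        (γ ^ 2 / ∑ i, (1 - lam i ^ 2) / (1 - lam i ^ (2 * k))) *
          ((1 - lam j ^ 2) / (1 - lam j ^ (2 * k))))).PosSemidef ∧
    (Matrix.diagonal (fun j =>
        (γ ^ 2 / ∑ i, (1 - lam i ^ 2) / (1 - lam i ^ (2 * k))) *
          ((1 - lam j ^ 2) / (1 - lam j ^ (2 * k))))).trace = γ ^ 2 ∧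
    (∑ t ∈ Finset.range k,
        (Matrix.diagonal lam) ^ t *
          Matrix.diagonal (fun j =>
            (γ ^ 2 / ∑ i, (1 - lam i ^ 2) / (1 - lam i ^ (2 * k))) *
              ((1 - lam j ^ 2) / (1 - lam j ^ (2 * k)))) *
          (Matrix.diagonal lam) ^ t) =
      (γ ^ 2 / ∑ i, (1 - lam i ^ 2) / (1 - lam i ^ (2 * k))) •
        (1 : Matrix (Fin d) (Fin d) ℝ) :=
  stmt12_general hd k hk γ lam hlam0 hlam1
end
end

section
/- Let d, p ≥ 1 and k ≥ 1 be integers, let 𝓘 ⊆ {1,…,k}, and let ε ≥ 0. Let A and Â be d×d complex matrices with ‖A − Â‖₂ ≤ ε, let B be a d×p complex matrix, let U_ℓ ∈ ℂ^p for ℓ = 1,…,k, and let w ∈ ℂ^d. Assume that for every δ ∈ [0,ε], every d×d complex matrix Δ with ‖Δ‖₂ ≤ 1, and every ℓ ∈ 𝓘, the matrix e^{iθ_ℓ}·I − A − δ·Δ is invertible. Then |w^H·H_k(A,B,U,𝓘)·w − w^H·H_k(Â,B,U,𝓘)·w| ≤ ε·L(A,B,U,ε,𝓘,w). -/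
noncomputable section

open Matrix

/-- Euclidean norm of a complex vector. -/
def enormC {n : Type*} [Fintype n] (v : n → ℂ) : ℝ :=
  Real.sqrt (∑ i, ‖v i‖ ^ 2)

/-- Spectral norm (ℓ² → ℓ² operator norm) of a complex matrix. -/
def snormC {m n : Type*} [Fintype m] [Fintype n] (M : Matrix m n ℂ) : ℝ :=
  sSup {r : ℝ | ∃ v : n → ℂ, enormC v ≤ 1 ∧ r = enormC (M.mulVec v)}

/-- The frequency `θ_ℓ = 2πℓ/k`. -/
def freq (k ℓ : ℕ) : ℝ := 2 * Real.pi * ℓ / k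

/-- `E_ℓ = e^{iθ_ℓ}·I − A`. -/
def Emat {d : ℕ} (k : ℕ) (A : Matrix (Fin d) (Fin d) ℂ) (ℓ : ℕ) :
    Matrix (Fin d) (Fin d) ℂ :=
  Complex.exp ((freq k ℓ : ℂ) * Complex.I) • (1 : Matrix (Fin d) (Fin d) ℂ) - A

/-- `H_k(A,B,U,𝓘) = Σ_{ℓ∈𝓘} (e^{iθ_ℓ}I−A)⁻¹·B·U_ℓ·U_ℓ^H·B^H·((e^{iθ_ℓ}I−A)⁻¹)^H`. -/
def Hmat {d p : ℕ} (k : ℕ) (A : Matrix (Fin d) (Fin d) ℂ) (B : Matrix (Fin d) (Fin p) ℂ)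
    (U : ℕ → Fin p → ℂ) (Is : Finset ℕ) : Matrix (Fin d) (Fin d) ℂ :=
  ∑ ℓ ∈ Is,
    Matrix.vecMulVec (((Emat k A ℓ)⁻¹ * B).mulVec (U ℓ))
      (star (((Emat k A ℓ)⁻¹ * B).mulVec (U ℓ)))

/-- The quadratic form
`Σ_{ℓ∈𝓘} w^H·(E_ℓ−δΔ)⁻¹·Δ·(E_ℓ−δΔ)⁻¹·B·U_ℓ·U_ℓ^H·B^H·((E_ℓ−δΔ)⁻¹)^H·w`. -/
def Lquad {d p : ℕ} (k : ℕ) (A Δ : Matrix (Fin d) (Fin d) ℂ) (B : Matrix (Fin d) (Fin p) ℂ)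
    (U : ℕ → Fin p → ℂ) (Is : Finset ℕ) (w : Fin d → ℂ) (δ : ℝ) : ℂ :=
  ∑ ℓ ∈ Is,
    dotProduct (star w)
      (((Emat k A ℓ - (δ : ℂ) • Δ)⁻¹ * Δ * (Emat k A ℓ - (δ : ℂ) • Δ)⁻¹ * B *
          Matrix.vecMulVec (U ℓ) (star (U ℓ)) * Bᴴ *
          ((Emat k A ℓ - (δ : ℂ) • Δ)⁻¹)ᴴ).mulVec w)

/-- The smoothness functional `L(A,B,U,ε,𝓘,w)`: the supremum, over `δ ∈ [0,ε]` and `‖Δ‖₂ = 1`,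
of twice the modulus of the above quadratic form. -/
def Lsup {d p : ℕ} (k : ℕ) (A : Matrix (Fin d) (Fin d) ℂ) (B : Matrix (Fin d) (Fin p) ℂ)
    (U : ℕ → Fin p → ℂ) (ε : ℝ) (Is : Finset ℕ) (w : Fin d → ℂ) : ℝ :=
  sSup {r : ℝ | ∃ δ ∈ Set.Icc (0 : ℝ) ε, ∃ Δ : Matrix (Fin d) (Fin d) ℂ,
    snormC Δ = 1 ∧ r = 2 * ‖Lquad k A Δ B U Is w δ‖}

/-! Write `Â = A + sΔ` with `s = ‖A - Â‖₂ ≤ ε` and `‖Δ‖₂ = 1`. Along the segment `t ↦ A + tΔ` the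
`ℓ`-th summand of `w^H H_k w` is `|z_ℓ(t)|²` with `z_ℓ(t) = w^H (E_ℓ - tΔ)⁻¹ B U_ℓ`, and since
`d/dt (E_ℓ - tΔ)⁻¹ = (E_ℓ - tΔ)⁻¹ Δ (E_ℓ - tΔ)⁻¹`, the derivative of the whole form is `2 Re` of the
quadratic form inside `L`, hence bounded by `L`. The mean value inequality then gives `s·L ≤ ε·L`.
The supremum `L` is finite because that quadratic form is continuous on the compact set
`[0, ε] × {‖Δ‖₂ = 1}`, where all the resolvents exist. -/

open scoped Matrix.Norms.L2Operator
open Matrix Set Finset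

theorem enormC_eq_norm_toLp {n : Type*} [Fintype n] (v : n → ℂ) :
    enormC v = ‖WithLp.toLp 2 v‖ := by
  simp [enormC, EuclideanSpace.norm_eq]

theorem snormC_eq_l2_opNorm {m n : Type*} [Fintype m] [Fintype n] [DecidableEq n]
    (M : Matrix m n ℂ) : snormC M = ‖M‖ := by
  rw [l2_opNorm_def, ← ContinuousLinearMap.sSup_unitClosedBall_eq_norm, snormC]
  congr 1
  ext r
  constructor
  · rintro ⟨v, hv, rfl⟩
    exact ⟨WithLp.toLp 2 v, by simpa [enormC_eq_norm_toLp] using hv,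
      by simp [enormC_eq_norm_toLp]⟩
  · rintro ⟨x, hx, rfl⟩
    exact ⟨x.ofLp, by simpa [enormC_eq_norm_toLp] using hx, by rw [enormC_eq_norm_toLp]; rfl⟩

theorem HasDerivAt.dotProduct_mulVec {m n : Type*} [Fintype m] [Fintype n] [DecidableEq n]
    {G : ℝ → Matrix m n ℂ} {G' : Matrix m n ℂ} {t : ℝ} (hG : HasDerivAt G G' t)
    (x : m → ℂ) (y : n → ℂ) : HasDerivAt (fun s => x ⬝ᵥ G s *ᵥ y) (x ⬝ᵥ G' *ᵥ y) t :=
  let L : Matrix m n ℂ →ₗ[ℝ] ℂ :=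
    { toFun := fun M => x ⬝ᵥ M *ᵥ y
      map_add' := fun M N => by simp [add_mulVec, dotProduct_add]
      map_smul' := fun c M => by simp [smul_mulVec, dotProduct_smul] }
  L.toContinuousLinearMap.hasFDerivAt.comp_hasDerivAt t hG

section Derivatives

variable {n : Type*} [Fintype n] [DecidableEq n] {G : ℝ → Matrix n n ℂ} {G' : Matrix n n ℂ}
  {t : ℝ}

theorem HasDerivAt.matrix_inv (hG : HasDerivAt G G' t) (hu : IsUnit (G t)) :
    HasDerivAt (fun s => (G s)⁻¹) (-((G t)⁻¹ * G' * (G t)⁻¹)) t := by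
  have hinv := (hasFDerivAt_ringInverse (𝕜 := ℂ) hu.unit).restrictScalars ℝ
  rw [hu.unit_spec] at hinv
  simpa [Function.comp_def, ← nonsing_inv_eq_ringInverse, Matrix.mul_assoc] using
    hinv.comp_hasDerivAt t hG

theorem hasDerivAt_inv_sub_smul (E Δ : Matrix n n ℂ) (hu : IsUnit (E - (t : ℂ) • Δ)) :
    HasDerivAt (fun s : ℝ => (E - (s : ℂ) • Δ)⁻¹)
      ((E - (t : ℂ) • Δ)⁻¹ * Δ * (E - (t : ℂ) • Δ)⁻¹) t := by
  have hline : HasDerivAt (fun s : ℝ => E - (s : ℂ) • Δ) (-Δ) t := by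
    have := (hasDerivAt_const t E).fun_sub ((hasDerivAt_id t).ofReal_comp.smul_const Δ)
    simp only [zero_sub, id, Complex.ofReal_one, one_smul] at this
    exact this
  simpa using hline.matrix_inv hu

end Derivatives

theorem dotProduct_vecMulVec_mulVec {R n : Type*} [CommSemiring R] [Fintype n]
    (x y a b : n → R) : x ⬝ᵥ vecMulVec a b *ᵥ y = (x ⬝ᵥ a) * (b ⬝ᵥ y) := by
  rw [vecMulVec_mulVec, op_smul_eq_smul, dotProduct_smul, smul_eq_mul, mul_comm]

section Hmat

variable {d p : ℕ} (k : ℕ) (A : Matrix (Fin d) (Fin d) ℂ) (B : Matrix (Fin d) (Fin p) ℂ)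
  (U : ℕ → Fin p → ℂ) (Is : Finset ℕ) (w : Fin d → ℂ)

theorem Emat_add_smul (Δ : Matrix (Fin d) (Fin d) ℂ) (c : ℂ) (ℓ : ℕ) :
    Emat k (A + c • Δ) ℓ = Emat k A ℓ - c • Δ := by
  unfold Emat
  abel

theorem star_dotProduct_Hmat_mulVec :
    star w ⬝ᵥ Hmat k A B U Is *ᵥ w =
      ∑ ℓ ∈ Is, (star w ⬝ᵥ (Emat k A ℓ)⁻¹ *ᵥ (B *ᵥ U ℓ)) *
        star (star w ⬝ᵥ (Emat k A ℓ)⁻¹ *ᵥ (B *ᵥ U ℓ)) := by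
  simp only [Hmat, sum_mulVec, dotProduct_sum, dotProduct_vecMulVec_mulVec, ← star_dotProduct,
    mulVec_mulVec]

theorem Lquad_eq_sum (Δ : Matrix (Fin d) (Fin d) ℂ) (δ : ℝ) :
    Lquad k A Δ B U Is w δ =
      ∑ ℓ ∈ Is, (star w ⬝ᵥ ((Emat k A ℓ - (δ : ℂ) • Δ)⁻¹ * Δ * (Emat k A ℓ - (δ : ℂ) • Δ)⁻¹) *ᵥ
          (B *ᵥ U ℓ)) * star (star w ⬝ᵥ (Emat k A ℓ - (δ : ℂ) • Δ)⁻¹ *ᵥ (B *ᵥ U ℓ)) := by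
  refine sum_congr rfl fun ℓ _ => ?_
  simp only [Matrix.mul_assoc, mul_vecMulVec, vecMulVec_mul, ← star_mulVec,
    dotProduct_vecMulVec_mulVec, ← star_dotProduct, mulVec_mulVec]

theorem hasDerivAt_star_dotProduct_Hmat_mulVec (Δ : Matrix (Fin d) (Fin d) ℂ) {t : ℝ}
    (hu : ∀ ℓ ∈ Is, IsUnit (Emat k A ℓ - (t : ℂ) • Δ)) :
    HasDerivAt (fun s : ℝ => star w ⬝ᵥ Hmat k (A + (s : ℂ) • Δ) B U Is *ᵥ w)
      (Lquad k A Δ B U Is w t + star (Lquad k A Δ B U Is w t)) t := by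
  simp only [star_dotProduct_Hmat_mulVec, Emat_add_smul, Lquad_eq_sum, star_sum,
    ← sum_add_distrib]
  refine HasDerivAt.fun_sum fun ℓ hℓ => ?_
  have hz := (hasDerivAt_inv_sub_smul (Emat k A ℓ) Δ (hu ℓ hℓ)).dotProduct_mulVec (star w)
    (B *ᵥ U ℓ)
  refine (hz.mul hz.star).congr_deriv ?_
  rw [star_mul', star_star, mul_comm (star _)]

end Hmat

section Lsup

variable {d p : ℕ} {k : ℕ} {A : Matrix (Fin d) (Fin d) ℂ} {B : Matrix (Fin d) (Fin p) ℂ}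
  {U : ℕ → Fin p → ℂ} {Is : Finset ℕ} {w : Fin d → ℂ} {ε : ℝ}

theorem continuousOn_Lquad :
    ContinuousOn (fun x : ℝ × Matrix (Fin d) (Fin d) ℂ => Lquad k A x.2 B U Is w x.1)
      {x | ∀ ℓ ∈ Is, IsUnit (Emat k A ℓ - (x.1 : ℂ) • x.2)} := by
  refine continuousOn_finsetSum Is fun ℓ hℓ x hx => ContinuousAt.continuousWithinAt ?_
  have hdet : ContinuousAt Ring.inverse (Emat k A ℓ - (x.1 : ℂ) • x.2).det := by
    rw [Ring.inverse_eq_inv']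
    exact continuousAt_inv₀ ((isUnit_iff_isUnit_det _).mp (hx ℓ hℓ)).ne_zero
  have hinv : ContinuousAt (fun y : ℝ × Matrix (Fin d) (Fin d) ℂ =>
      (Emat k A ℓ - (y.1 : ℂ) • y.2)⁻¹) x :=
    (continuousAt_matrix_inv _ hdet).comp (f := fun y : ℝ × Matrix (Fin d) (Fin d) ℂ =>
      Emat k A ℓ - (y.1 : ℂ) • y.2) (by fun_prop)
  fun_prop

theorem Lsup_nonneg : 0 ≤ Lsup k A B U ε Is w :=
  Real.sSup_nonneg (by rintro _ ⟨_, _, _, _, rfl⟩; positivity)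

theorem two_mul_norm_Lquad_le_Lsup
    (hinv : ∀ δ ∈ Icc (0 : ℝ) ε, ∀ Δ : Matrix (Fin d) (Fin d) ℂ, snormC Δ ≤ 1 →
      ∀ ℓ ∈ Is, IsUnit (Emat k A ℓ - (δ : ℂ) • Δ))
    {δ : ℝ} (hδ : δ ∈ Icc 0 ε) {Δ : Matrix (Fin d) (Fin d) ℂ} (hΔ : snormC Δ = 1) :
    2 * ‖Lquad k A Δ B U Is w δ‖ ≤ Lsup k A B U ε Is w := by
  set K := Icc 0 ε ×ˢ Metric.sphere (0 : Matrix (Fin d) (Fin d) ℂ) 1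
  have hK : IsCompact K := isCompact_Icc.prod (isCompact_sphere 0 1)
  have hKunit : K ⊆ {x | ∀ ℓ ∈ Is, IsUnit (Emat k A ℓ - (x.1 : ℂ) • x.2)} := fun x hx =>
    hinv x.1 hx.1 x.2 (by rw [snormC_eq_l2_opNorm, mem_sphere_zero_iff_norm.mp hx.2])
  have hcont : ContinuousOn (fun x : ℝ × Matrix (Fin d) (Fin d) ℂ =>
      2 * ‖Lquad k A x.2 B U Is w x.1‖) K :=
    continuousOn_const.mul (continuousOn_Lquad.mono hKunit).norm
  have hbdd := (hK.image_of_continuousOn hcont).bddAbove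
  refine le_csSup (hbdd.mono ?_) ⟨δ, hδ, Δ, hΔ, rfl⟩
  rintro _ ⟨δ, hδ, Δ, hΔ, rfl⟩
  exact ⟨(δ, Δ), ⟨hδ, by simpa [snormC_eq_l2_opNorm] using hΔ⟩, rfl⟩

theorem norm_sub_star_dotProduct_Hmat_mulVec_le
    (hinv : ∀ δ ∈ Icc (0 : ℝ) ε, ∀ Δ : Matrix (Fin d) (Fin d) ℂ, snormC Δ ≤ 1 →
      ∀ ℓ ∈ Is, IsUnit (Emat k A ℓ - (δ : ℂ) • Δ))
    {Δ : Matrix (Fin d) (Fin d) ℂ} (hΔ : snormC Δ = 1) {s : ℝ} (hs : s ∈ Icc 0 ε) :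
    ‖star w ⬝ᵥ Hmat k (A + (s : ℂ) • Δ) B U Is *ᵥ w - star w ⬝ᵥ Hmat k A B U Is *ᵥ w‖ ≤
      Lsup k A B U ε Is w * s := by
  have hsub : Icc 0 s ⊆ Icc 0 ε := Icc_subset_Icc_right hs.2
  have hderiv : ∀ t ∈ Icc 0 s, HasDerivWithinAt
      (fun s : ℝ => star w ⬝ᵥ Hmat k (A + (s : ℂ) • Δ) B U Is *ᵥ w)
      (Lquad k A Δ B U Is w t + star (Lquad k A Δ B U Is w t)) (Icc 0 s) t :=
    fun t ht => (hasDerivAt_star_dotProduct_Hmat_mulVec k A B U Is w Δ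
      (hinv t (hsub ht) Δ hΔ.le)).hasDerivWithinAt
  have hbound : ∀ t ∈ Icc 0 s,
      ‖Lquad k A Δ B U Is w t + star (Lquad k A Δ B U Is w t)‖ ≤ Lsup k A B U ε Is w :=
    fun t ht => calc
      _ ≤ ‖Lquad k A Δ B U Is w t‖ + ‖star (Lquad k A Δ B U Is w t)‖ := norm_add_le _ _
      _ = 2 * ‖Lquad k A Δ B U Is w t‖ := by rw [norm_star]; ring
      _ ≤ Lsup k A B U ε Is w := two_mul_norm_Lquad_le_Lsup hinv (hsub ht) hΔ
  simpa [Real.norm_of_nonneg hs.1] using Convex.norm_image_sub_le_of_norm_hasDerivWithin_le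
    hderiv hbound (convex_Icc 0 s) (left_mem_Icc.2 hs.1) (right_mem_Icc.2 hs.1)

end Lsup

theorem stmt13_general {d p : ℕ} (k : ℕ)
    (Is : Finset ℕ) (ε : ℝ)
    (A Ahat : Matrix (Fin d) (Fin d) ℂ) (hclose : snormC (A - Ahat) ≤ ε)
    (B : Matrix (Fin d) (Fin p) ℂ) (U : ℕ → Fin p → ℂ) (w : Fin d → ℂ)
    (hinv : ∀ δ ∈ Set.Icc (0 : ℝ) ε, ∀ Δ : Matrix (Fin d) (Fin d) ℂ, snormC Δ ≤ 1 →
      ∀ ℓ ∈ Is, IsUnit (Emat k A ℓ - (δ : ℂ) • Δ)) :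
    ‖(dotProduct (star w) ((Hmat k A B U Is).mulVec w) -
          dotProduct (star w) ((Hmat k Ahat B U Is).mulVec w))‖ ≤
      ε * Lsup k A B U ε Is w := by
  rw [snormC_eq_l2_opNorm] at hclose
  obtain rfl | hne := eq_or_ne A Ahat
  · simpa using mul_nonneg (by simpa using hclose) Lsup_nonneg
  set s := ‖A - Ahat‖
  have hs : 0 < s := norm_pos_iff.2 (sub_ne_zero.2 hne)
  set Δ := (s : ℂ)⁻¹ • (Ahat - A)
  have hΔ : snormC Δ = 1 := by
    rw [snormC_eq_l2_opNorm, norm_smul, norm_inv, Complex.norm_real, Real.norm_of_nonneg hs.le,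
      norm_sub_rev, inv_mul_cancel₀ hs.ne']
  have hAhat : A + (s : ℂ) • Δ = Ahat := by
    rw [smul_smul, mul_inv_cancel₀ (by exact_mod_cast hs.ne'), one_smul, add_sub_cancel]
  rw [norm_sub_rev, ← hAhat, mul_comm]
  exact (norm_sub_star_dotProduct_Hmat_mulVec_le hinv hΔ ⟨hs.le, hclose⟩).trans
    (mul_le_mul_of_nonneg_left hclose Lsup_nonneg)

/-- **Directional perturbation bound.**  If `‖A − Â‖₂ ≤ ε` and all perturbed resolvents on
the relevant frequencies are invertible, then
`|w^H·H_k(A,B,U,𝓘)·w − w^H·H_k(Â,B,U,𝓘)·w| ≤ ε·L(A,B,U,ε,𝓘,w)`. -/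
theorem stmt13 {d p : ℕ} (hd : 1 ≤ d) (hp : 1 ≤ p) (k : ℕ) (hk : 1 ≤ k)
    (Is : Finset ℕ) (hIs : Is ⊆ Finset.Icc 1 k) (ε : ℝ) (hε : 0 ≤ ε)
    (A Ahat : Matrix (Fin d) (Fin d) ℂ) (hclose : snormC (A - Ahat) ≤ ε)
    (B : Matrix (Fin d) (Fin p) ℂ) (U : ℕ → Fin p → ℂ) (w : Fin d → ℂ)
    (hinv : ∀ δ ∈ Set.Icc (0 : ℝ) ε, ∀ Δ : Matrix (Fin d) (Fin d) ℂ, snormC Δ ≤ 1 →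
      ∀ ℓ ∈ Is, IsUnit (Emat k A ℓ - (δ : ℂ) • Δ)) :
    ‖(dotProduct (star w) ((Hmat k A B U Is).mulVec w) -
          dotProduct (star w) ((Hmat k Ahat B U Is).mulVec w))‖ ≤
      ε * Lsup k A B U ε Is w :=
  stmt13_general k Is ε A Ahat hclose B U w hinv
end
end

section
/- Let d, p ≥ 1, σ ≥ 0, γ > 0, let A be a d×d real matrix with spectral radius strictly less than 1, and let B be a d×p real matrix. For an integer k ≥ 1 define Γ_k := Σ_{s=0}^{k−1} A^s·(A^s)ᵀ and Ψ(k) := sup { λmin( σ²·Γ_k + (1/k²)·Σ_{ℓ=1}^k (e^{2πiℓ/k}·I − A)⁻¹·B·U_ℓ·U_ℓ^H·B^H·((e^{2πiℓ/k}·I − A)⁻¹)^H ) : U ∈ 𝒰_{γ²}(k) }. Then for every integer k₀ ≥ 1, the sequence i ↦ Ψ(k₀·2^i) converges to a finite limit, i.e. there exists c ∈ ℝ such that Ψ(k₀·2^i) → c as i → ∞. -/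
noncomputable section

open Matrix

/-- Complexification of a real matrix. -/
def cmap {m n : Type*} (A : Matrix m n ℝ) : Matrix m n ℂ :=
  A.map ((↑) : ℝ → ℂ)

/-- Smallest eigenvalue of a Hermitian complex matrix, as the infimum of the quadratic form
over unit vectors. -/
def lamMin {d : ℕ} (N : Matrix (Fin d) (Fin d) ℂ) : ℝ :=
  ⨅ w : {w : Fin d → ℂ // enormC w = 1},
    (dotProduct (star w.1) (N.mulVec w.1)).re

/-- Feasible input spectra `𝒰_{γ²}(k)`: `U_ℓ` is the DFT of a real period-`k` signal,
with total spectral power at most `k²·γ²`. -/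
def Feas' (p k : ℕ) (γ : ℝ) (U : ℕ → Fin p → ℂ) : Prop :=
  (∃ u : ℕ → Fin p → ℝ,
      ∀ ℓ ∈ Finset.Icc 1 k, ∀ j, U ℓ j =
        ∑ t ∈ Finset.Icc 1 k,
          Complex.exp (-((freq k ℓ : ℂ) * (t : ℂ)) * Complex.I) * (u t j : ℝ)) ∧
  ∑ ℓ ∈ Finset.Icc 1 k, enormC (U ℓ) ^ 2 ≤ (k : ℝ) ^ 2 * γ ^ 2

/-- `Ψ(k)`: the optimal minimum eigenvalue of the expected covariates (noise plus input
response) achievable by a period-`k` input of average power at most `γ²`. -/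
def Psi {d p : ℕ} (A : Matrix (Fin d) (Fin d) ℝ) (B : Matrix (Fin d) (Fin p) ℝ)
    (σ γ : ℝ) (k : ℕ) : ℝ :=
  sSup {r : ℝ | ∃ U : ℕ → Fin p → ℂ, Feas' p k γ U ∧
    r = lamMin
      (σ ^ 2 • (∑ s ∈ Finset.range k, A ^ s * (A ^ s)ᵀ).map ((↑) : ℝ → ℂ) +
        ((k : ℝ) ^ 2)⁻¹ •
          ∑ ℓ ∈ Finset.Icc 1 k,
            Matrix.vecMulVec (((Emat k (cmap A) ℓ)⁻¹ * cmap B).mulVec (U ℓ))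
              (star (((Emat k (cmap A) ℓ)⁻¹ * cmap B).mulVec (U ℓ)))) }

/-!
The sequence is nondecreasing and bounded. Repeating a period-`k` input twice gives a period-`2k`
input of the same average power whose DFT is `2 U_m` at the frequency `2m` (which is the old
frequency `θ_m`) and vanishes at odd frequencies. So the input term of the covariates is unchanged,
while the noise part `Γ_{2k} = Γ_k + Σ_{k ≤ s < 2k} A^s (A^s)ᵀ` only grows: `Ψ(k) ≤ Ψ(2k)`.
For the bound, evaluate the quadratic form at a coordinate vector: `Σ_s ‖A^s‖²` is finite by
Gelfand's formula since `ρ(A) < 1`, and the resolvent `(e^{iθ} I − A)⁻¹` is bounded on the unit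
circle by compactness.
-/

open Matrix Filter Finset
open scoped NNReal ENNReal ComplexOrder Matrix.Norms.Frobenius

section GelfandFormula

variable {𝔸 : Type*} [NormedRing 𝔸] [NormedAlgebra ℂ 𝔸] [CompleteSpace 𝔸]

theorem eventually_norm_pow_le_of_spectralRadius_lt {a : 𝔸} {r : ℝ≥0}
    (h : spectralRadius ℂ a < r) : ∀ᶠ n in atTop, ‖a ^ n‖ ≤ (r : ℝ) ^ n := by
  filter_upwards [eventually_ne_atTop 0,
    (spectrum.pow_norm_pow_one_div_tendsto_nhds_spectralRadius a).eventually_lt_const h]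
    with n hn0 hn
  rw [ENNReal.ofReal_lt_iff_lt_toReal (by positivity) ENNReal.coe_ne_top, ENNReal.coe_toReal,
    one_div] at hn
  rw [← Real.rpow_inv_natCast_pow (norm_nonneg (a ^ n)) hn0]
  exact pow_le_pow_left₀ (by positivity) hn.le n

theorem summable_norm_pow_sq_of_spectralRadius_lt_one {a : 𝔸} (h : spectralRadius ℂ a < 1) :
    Summable fun n => ‖a ^ n‖ ^ 2 := by
  obtain ⟨r, hr, hr1⟩ := ENNReal.lt_iff_exists_nnreal_btwn.1 h
  have hr1 : (r : ℝ) < 1 := by exact_mod_cast hr1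
  refine Summable.of_norm_bounded_eventually_nat
    (summable_geometric_of_lt_one (by positivity) (pow_lt_one₀ r.2 hr1 two_ne_zero)) ?_
  filter_upwards [eventually_norm_pow_le_of_spectralRadius_lt hr] with n hn
  rw [Real.norm_of_nonneg (by positivity), ← pow_mul, mul_comm, pow_mul]
  exact pow_le_pow_left₀ (norm_nonneg _) hn 2

end GelfandFormula

section MatrixEntries

variable {m n : Type*}

theorem sum_norm_sq_apply_le_frobenius_norm_sq [Fintype m] [Fintype n] {α : Type*}
    [SeminormedAddCommGroup α] (M : Matrix m n α) (i : m) : ∑ j, ‖M i j‖ ^ 2 ≤ ‖M‖ ^ 2 := by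
  rw [frobenius_norm_def, ← Real.sqrt_eq_rpow, Real.sq_sqrt (by positivity)]
  simp only [Real.rpow_two]
  exact single_le_sum (f := fun i => ∑ j, ‖M i j‖ ^ 2) (fun _ _ => by positivity) (mem_univ i)

theorem norm_mulVec_apply_sq_le [Fintype n] {α : Type*} [SeminormedRing α] (M : Matrix m n α)
    (v : n → α) (i : m) : ‖(M *ᵥ v) i‖ ^ 2 ≤ (∑ j, ‖M i j‖ ^ 2) * ∑ j, ‖v j‖ ^ 2 :=
  calc ‖(M *ᵥ v) i‖ ^ 2 ≤ (∑ j, ‖M i j‖ * ‖v j‖) ^ 2 := by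
        gcongr
        exact (norm_sum_le _ _).trans (sum_le_sum fun j _ => norm_mul_le _ _)
    _ ≤ _ := sum_mul_sq_le_sq_mul_sq _ _ _

theorem re_mul_conjTranspose_apply_self [Fintype n] (M : Matrix m n ℂ) (i : m) :
    ((M * Mᴴ) i i).re = ∑ j, ‖M i j‖ ^ 2 := by
  simp [mul_apply, Complex.mul_conj, Complex.sq_norm]

theorem re_vecMulVec_star_apply_self (x : m → ℂ) (i : m) :
    (vecMulVec x (star x) i i).re = ‖x i‖ ^ 2 := by
  simp [vecMulVec_apply, Complex.mul_conj, Complex.sq_norm]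

theorem re_dotProduct_mulVec_nonneg [Fintype n] {N : Matrix n n ℂ} (hN : N.PosSemidef) (w : n → ℂ) :
    0 ≤ (star w ⬝ᵥ N *ᵥ w).re :=
  (Complex.nonneg_iff.1 (hN.dotProduct_mulVec_nonneg w)).1

end MatrixEntries

theorem sum_Icc_one_two_mul {M : Type*} [AddCommMonoid M] (f : ℕ → M) (k : ℕ) :
    ∑ t ∈ Icc 1 (2 * k), f t = ∑ t ∈ Icc 1 k, f t + ∑ t ∈ Icc 1 k, f (t + k) := by
  rw [← Ico_add_one_right_eq_Icc, ← Ico_add_one_right_eq_Icc, sum_Ico_add',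
    show 1 + k = k + 1 by ring, show k + 1 + k = 2 * k + 1 by ring,
    sum_Ico_consecutive f (by omega : 1 ≤ k + 1) (by omega : k + 1 ≤ 2 * k + 1)]

theorem sum_Icc_one_two_mul_of_odd_eq_zero {M : Type*} [AddCommMonoid M] {f : ℕ → M}
    (hf : ∀ m, f (2 * m + 1) = 0) (k : ℕ) :
    ∑ ℓ ∈ Icc 1 (2 * k), f ℓ = ∑ m ∈ Icc 1 k, f (2 * m) := by
  induction k with
  | zero => simp
  | succ k ih =>
    rw [show 2 * (k + 1) = 2 * k + 1 + 1 by ring, sum_Icc_succ_top (by omega),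
      sum_Icc_succ_top (by omega), ih, hf, add_zero, sum_Icc_succ_top (by omega)]
    rfl

section LamMin

variable {d : ℕ}

theorem enormC_sq {n : Type*} [Fintype n] (v : n → ℂ) : enormC v ^ 2 = ∑ j, ‖v j‖ ^ 2 :=
  Real.sq_sqrt (by positivity)

theorem enormC_single (i : Fin d) : enormC (Pi.single i 1) = 1 := by
  simp [enormC, Pi.single_apply, apply_ite]

theorem lamMin_le_re_dotProduct {N : Matrix (Fin d) (Fin d) ℂ} (hN : N.PosSemidef) {w : Fin d → ℂ}
    (hw : enormC w = 1) : lamMin N ≤ (star w ⬝ᵥ N *ᵥ w).re :=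
  ciInf_le ⟨0, by rintro _ ⟨v, rfl⟩; exact re_dotProduct_mulVec_nonneg hN v⟩
    (⟨w, hw⟩ : {w : Fin d → ℂ // enormC w = 1})

theorem lamMin_le_re_apply_self {N : Matrix (Fin d) (Fin d) ℂ} (hN : N.PosSemidef) (i : Fin d) :
    lamMin N ≤ (N i i).re := by
  simpa [mulVec_single, dotProduct_single] using lamMin_le_re_dotProduct hN (enormC_single i)

theorem lamMin_le_lamMin_add [NeZero d] {N P : Matrix (Fin d) (Fin d) ℂ} (hN : N.PosSemidef)
    (hP : P.PosSemidef) : lamMin N ≤ lamMin (N + P) := by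
  have : Nonempty {w : Fin d → ℂ // enormC w = 1} := ⟨⟨_, enormC_single 0⟩⟩
  refine le_ciInf fun w => (lamMin_le_re_dotProduct hN w.2).trans ?_
  rw [add_mulVec, dotProduct_add, Complex.add_re]
  exact le_add_of_nonneg_right (re_dotProduct_mulVec_nonneg hP _)

end LamMin

section Model

variable {d p : ℕ}

def transfer (A : Matrix (Fin d) (Fin d) ℝ) (B : Matrix (Fin d) (Fin p) ℝ) (k ℓ : ℕ) :
    Matrix (Fin d) (Fin p) ℂ :=
  (Emat k (cmap A) ℓ)⁻¹ * cmap B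

def powGram {n : Type*} [Fintype n] [DecidableEq n] (M : Matrix n n ℂ) (s : Finset ℕ) :
    Matrix n n ℂ :=
  ∑ i ∈ s, M ^ i * (M ^ i)ᴴ

def inputGram (A : Matrix (Fin d) (Fin d) ℝ) (B : Matrix (Fin d) (Fin p) ℝ) (k : ℕ)
    (U : ℕ → Fin p → ℂ) : Matrix (Fin d) (Fin d) ℂ :=
  ((k : ℝ) ^ 2)⁻¹ •
    ∑ ℓ ∈ Icc 1 k, vecMulVec (transfer A B k ℓ *ᵥ U ℓ) (star (transfer A B k ℓ *ᵥ U ℓ))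

def covariates (A : Matrix (Fin d) (Fin d) ℝ) (B : Matrix (Fin d) (Fin p) ℝ) (σ : ℝ) (k : ℕ)
    (U : ℕ → Fin p → ℂ) : Matrix (Fin d) (Fin d) ℂ :=
  σ ^ 2 • powGram (cmap A) (range k) + inputGram A B k U

def excitationSet (A : Matrix (Fin d) (Fin d) ℝ) (B : Matrix (Fin d) (Fin p) ℝ) (σ γ : ℝ)
    (k : ℕ) : Set ℝ :=
  {r | ∃ U, Feas' p k γ U ∧ r = lamMin (covariates A B σ k U)}

theorem map_ofReal_sum_pow_mul_transpose (A : Matrix (Fin d) (Fin d) ℝ) (s : Finset ℕ) :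
    (∑ i ∈ s, A ^ i * (A ^ i)ᵀ).map ((↑) : ℝ → ℂ) = powGram (cmap A) s := by
  have h (M : Matrix (Fin d) (Fin d) ℝ) : M.map ((↑) : ℝ → ℂ) = Complex.ofRealHom.mapMatrix M := rfl
  simp only [powGram, cmap, h, map_sum, map_mul, map_pow]
  refine sum_congr rfl fun i _ => ?_
  rw [← map_pow, ← h, ← h, ← conjTranspose_map _ fun r => (Complex.conj_ofReal r).symm,
    conjTranspose_eq_transpose_of_trivial]

theorem Psi_eq_sSup_excitationSet (A : Matrix (Fin d) (Fin d) ℝ) (B : Matrix (Fin d) (Fin p) ℝ)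
    (σ γ : ℝ) (k : ℕ) : Psi A B σ γ k = sSup (excitationSet A B σ γ k) := by
  rw [Psi, excitationSet, map_ofReal_sum_pow_mul_transpose]
  rfl

theorem posSemidef_powGram {n : Type*} [Fintype n] [DecidableEq n] (M : Matrix n n ℂ)
    (s : Finset ℕ) : (powGram M s).PosSemidef :=
  posSemidef_sum _ fun _ _ => posSemidef_self_mul_conjTranspose _

theorem posSemidef_covariates (A : Matrix (Fin d) (Fin d) ℝ) (B : Matrix (Fin d) (Fin p) ℝ)
    (σ : ℝ) (k : ℕ) (U : ℕ → Fin p → ℂ) : (covariates A B σ k U).PosSemidef :=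
  ((posSemidef_powGram _ _).smul (sq_nonneg σ)).add
    ((posSemidef_sum _ fun _ _ => posSemidef_vecMulVec_self_star _).smul (by positivity))

theorem re_powGram_apply_self_le {n : Type*} [Fintype n] [DecidableEq n] (M : Matrix n n ℂ)
    (s : Finset ℕ) (i : n) : (powGram M s i i).re ≤ ∑ j ∈ s, ‖M ^ j‖ ^ 2 := by
  simp only [powGram, Matrix.sum_apply, Complex.re_sum, re_mul_conjTranspose_apply_self]
  exact sum_le_sum fun j _ => sum_norm_sq_apply_le_frobenius_norm_sq _ i

theorem re_inputGram_apply_self_le {A : Matrix (Fin d) (Fin d) ℝ} {B : Matrix (Fin d) (Fin p) ℝ}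
    {k : ℕ} (hk : k ≠ 0) {C γ : ℝ} (hC : ∀ ℓ ∈ Icc 1 k, ‖transfer A B k ℓ‖ ≤ C)
    {U : ℕ → Fin p → ℂ} (hU : Feas' p k γ U) (i : Fin d) :
    (inputGram A B k U i i).re ≤ C ^ 2 * γ ^ 2 := by
  have hterm (ℓ : ℕ) (hℓ : ℓ ∈ Icc 1 k) :
      ‖(transfer A B k ℓ *ᵥ U ℓ) i‖ ^ 2 ≤ C ^ 2 * enormC (U ℓ) ^ 2 :=
    calc _ ≤ (∑ j, ‖transfer A B k ℓ i j‖ ^ 2) * ∑ j, ‖U ℓ j‖ ^ 2 := norm_mulVec_apply_sq_le _ _ _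
      _ ≤ ‖transfer A B k ℓ‖ ^ 2 * enormC (U ℓ) ^ 2 := by
        rw [enormC_sq]; gcongr; exact sum_norm_sq_apply_le_frobenius_norm_sq _ _
      _ ≤ C ^ 2 * enormC (U ℓ) ^ 2 := by gcongr; exact hC ℓ hℓ
  calc (inputGram A B k U i i).re
      = ((k : ℝ) ^ 2)⁻¹ * ∑ ℓ ∈ Icc 1 k, ‖(transfer A B k ℓ *ᵥ U ℓ) i‖ ^ 2 := by
        simp only [inputGram, Matrix.smul_apply, Matrix.sum_apply, Complex.smul_re, Complex.re_sum,
          re_vecMulVec_star_apply_self, smul_eq_mul]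
    _ ≤ ((k : ℝ) ^ 2)⁻¹ * (C ^ 2 * ((k : ℝ) ^ 2 * γ ^ 2)) := by
        gcongr
        exact (sum_le_sum hterm).trans (by rw [← mul_sum]; gcongr; exact hU.2)
    _ = C ^ 2 * γ ^ 2 := by field_simp

theorem re_covariates_apply_self_le {A : Matrix (Fin d) (Fin d) ℝ} {B : Matrix (Fin d) (Fin p) ℝ}
    (σ : ℝ) {k : ℕ} (hk : k ≠ 0) {C γ : ℝ} (hC : ∀ ℓ ∈ Icc 1 k, ‖transfer A B k ℓ‖ ≤ C)
    {U : ℕ → Fin p → ℂ} (hU : Feas' p k γ U) (i : Fin d) :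
    (covariates A B σ k U i i).re ≤ σ ^ 2 * ∑ s ∈ range k, ‖cmap A ^ s‖ ^ 2 + C ^ 2 * γ ^ 2 := by
  rw [covariates, Matrix.add_apply, Matrix.smul_apply, Complex.add_re, Complex.smul_re, smul_eq_mul]
  gcongr
  · exact re_powGram_apply_self_le _ _ i
  · exact re_inputGram_apply_self_le hk hC hU i

theorem transfer_eq_resolvent (A : Matrix (Fin d) (Fin d) ℝ) (B : Matrix (Fin d) (Fin p) ℝ)
    (k ℓ : ℕ) :
    transfer A B k ℓ = resolvent (cmap A) (Complex.exp (freq k ℓ * Complex.I)) * cmap B := by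
  rw [transfer, Emat, resolvent, Algebra.algebraMap_eq_smul_one, nonsing_inv_eq_ringInverse]

theorem exists_norm_transfer_le (A : Matrix (Fin d) (Fin d) ℝ)
    (hA : spectralRadius ℂ (cmap A) < 1) (B : Matrix (Fin d) (Fin p) ℝ) :
    ∃ C, ∀ k ℓ, ‖transfer A B k ℓ‖ ≤ C := by
  have hcircle : Metric.sphere (0 : ℂ) 1 ⊆ resolventSet ℂ (cmap A) := fun z hz =>
    spectrum.mem_resolventSet_of_spectralRadius_lt (by
      rwa [show ‖z‖₊ = 1 from NNReal.eq (mem_sphere_zero_iff_norm.1 hz), ENNReal.coe_one])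
  obtain ⟨C, hC⟩ := (isCompact_sphere (0 : ℂ) 1).exists_bound_of_continuousOn fun z hz =>
    (spectrum.hasDerivAt_resolvent_const_left (hcircle hz)).continuousAt.continuousWithinAt
  refine ⟨C * ‖cmap B‖, fun k ℓ => ?_⟩
  rw [transfer_eq_resolvent]
  exact (frobenius_norm_mul _ _).trans
    (by gcongr; exact hC _ (by simp [Complex.norm_exp_ofReal_mul_I]))

end Model

section Doubling

variable {d p : ℕ}

-- `Feas' p k γ U` asks for a real signal `u` with `U ℓ = dftAt (freq k ℓ) k u` for `1 ≤ ℓ ≤ k`.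
def dftAt (θ : ℝ) (k : ℕ) (u : ℕ → Fin p → ℝ) (j : Fin p) : ℂ :=
  ∑ t ∈ Icc 1 k, Complex.exp (-((θ : ℂ) * (t : ℂ)) * Complex.I) * (u t j : ℂ)

def periodicDouble (k : ℕ) (u : ℕ → Fin p → ℝ) : ℕ → Fin p → ℝ :=
  fun t => if t ≤ k then u t else u (t - k)

theorem dftAt_periodicDouble (θ : ℝ) (k : ℕ) (u : ℕ → Fin p → ℝ) (j : Fin p) :
    dftAt θ (2 * k) (periodicDouble k u) j
      = (1 + Complex.exp (-((θ : ℂ) * k) * Complex.I)) * dftAt θ k u j := by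
  rw [dftAt, sum_Icc_one_two_mul, add_mul, one_mul, dftAt, mul_sum]
  congr 1
  · refine sum_congr rfl fun t ht => ?_
    rw [periodicDouble, if_pos (mem_Icc.1 ht).2]
  · refine sum_congr rfl fun t ht => ?_
    rw [periodicDouble, if_neg (by simp only [mem_Icc] at ht; omega), Nat.add_sub_cancel]
    rw [show -((θ : ℂ) * ((t + k : ℕ) : ℂ)) * Complex.I
        = -((θ : ℂ) * t) * Complex.I + -((θ : ℂ) * k) * Complex.I by push_cast; ring,
      Complex.exp_add]
    ring

theorem freq_two_mul (k m : ℕ) : freq (2 * k) (2 * m) = freq k m := by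
  rw [freq, freq]
  push_cast
  rw [show 2 * Real.pi * (2 * m) = 2 * (2 * Real.pi * m) by ring, mul_div_mul_left _ _ two_ne_zero]

theorem exp_neg_freq_two_mul_mul {k : ℕ} (hk : k ≠ 0) (ℓ : ℕ) :
    Complex.exp (-((freq (2 * k) ℓ : ℂ) * k) * Complex.I) = (-1) ^ ℓ := by
  have h : (freq (2 * k) ℓ : ℂ) * k = ℓ * Real.pi := by
    rw [freq]
    push_cast
    field_simp
  rw [h, show -((ℓ : ℂ) * Real.pi) * Complex.I = ℓ * -(Real.pi * Complex.I) by ring,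
    Complex.exp_nat_mul, Complex.exp_neg, Complex.exp_pi_mul_I]
  norm_num

theorem Feas'.exists_two_mul {k : ℕ} (hk : k ≠ 0) {γ : ℝ} {U : ℕ → Fin p → ℂ}
    (hU : Feas' p k γ U) :
    ∃ U' : ℕ → Fin p → ℂ, Feas' p (2 * k) γ U' ∧ (∀ m ∈ Icc 1 k, U' (2 * m) = (2 : ℂ) • U m) ∧
      ∀ m, U' (2 * m + 1) = 0 := by
  obtain ⟨⟨u, hu⟩, hpow⟩ := hU
  set U' : ℕ → Fin p → ℂ := fun ℓ => dftAt (freq (2 * k) ℓ) (2 * k) (periodicDouble k u)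
  have hU' (ℓ : ℕ) (j : Fin p) : U' ℓ j = (1 + (-1) ^ ℓ) * dftAt (freq (2 * k) ℓ) k u j := by
    simp only [U', dftAt_periodicDouble, exp_neg_freq_two_mul_mul hk]
  have heven : ∀ m ∈ Icc 1 k, U' (2 * m) = (2 : ℂ) • U m := fun m hm => funext fun j => by
    rw [hU', freq_two_mul, Pi.smul_apply, hu m hm j, pow_mul]
    norm_num [dftAt]
  have hodd (m : ℕ) : U' (2 * m + 1) = 0 := funext fun j => by
    rw [hU', pow_succ, pow_mul]
    norm_num
  refine ⟨U', ⟨⟨periodicDouble k u, fun ℓ _ j => rfl⟩, ?_⟩, heven, hodd⟩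
  rw [sum_Icc_one_two_mul_of_odd_eq_zero (fun m => by simp [hodd, enormC])]
  calc ∑ m ∈ Icc 1 k, enormC (U' (2 * m)) ^ 2 = 4 * ∑ m ∈ Icc 1 k, enormC (U m) ^ 2 := by
        rw [mul_sum]
        refine sum_congr rfl fun m hm => ?_
        simp only [heven m hm, enormC_sq, mul_sum, Pi.smul_apply, smul_eq_mul, norm_mul,
          Complex.norm_two]
        ring_nf
    _ ≤ 4 * ((k : ℝ) ^ 2 * γ ^ 2) := by gcongr
    _ = ((2 * k : ℕ) : ℝ) ^ 2 * γ ^ 2 := by push_cast; ring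

theorem transfer_two_mul (A : Matrix (Fin d) (Fin d) ℝ) (B : Matrix (Fin d) (Fin p) ℝ)
    (k m : ℕ) : transfer A B (2 * k) (2 * m) = transfer A B k m := by
  rw [transfer, transfer, Emat, Emat, freq_two_mul]

theorem inputGram_two_mul (A : Matrix (Fin d) (Fin d) ℝ) (B : Matrix (Fin d) (Fin p) ℝ)
    {k : ℕ} {U U' : ℕ → Fin p → ℂ} (heven : ∀ m ∈ Icc 1 k, U' (2 * m) = (2 : ℂ) • U m)
    (hodd : ∀ m, U' (2 * m + 1) = 0) : inputGram A B (2 * k) U' = inputGram A B k U := by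
  have hterm : ∀ m ∈ Icc 1 k,
      vecMulVec (transfer A B (2 * k) (2 * m) *ᵥ U' (2 * m))
          (star (transfer A B (2 * k) (2 * m) *ᵥ U' (2 * m)))
        = (4 : ℝ) • vecMulVec (transfer A B k m *ᵥ U m) (star (transfer A B k m *ᵥ U m)) :=
    fun m hm => by
      rw [heven m hm, transfer_two_mul]
      ext a b
      simp only [mulVec_smul, star_smul, star_ofNat, vecMulVec_apply, Pi.smul_apply, smul_eq_mul,
        Pi.star_apply, RCLike.star_def, Matrix.smul_apply, Complex.real_smul, Complex.ofReal_ofNat]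
      ring
  rw [inputGram, sum_Icc_one_two_mul_of_odd_eq_zero (fun m => by simp [hodd]), sum_congr rfl hterm,
    ← smul_sum, smul_smul, inputGram]
  congr 1
  push_cast
  ring

theorem lamMin_covariates_le_two_mul [NeZero d] (A : Matrix (Fin d) (Fin d) ℝ)
    (B : Matrix (Fin d) (Fin p) ℝ) (σ : ℝ) {k : ℕ} {U U' : ℕ → Fin p → ℂ}
    (heven : ∀ m ∈ Icc 1 k, U' (2 * m) = (2 : ℂ) • U m) (hodd : ∀ m, U' (2 * m + 1) = 0) :
    lamMin (covariates A B σ k U) ≤ lamMin (covariates A B σ (2 * k) U') := by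
  have hsplit : covariates A B σ (2 * k) U'
      = covariates A B σ k U + σ ^ 2 • powGram (cmap A) (Ico k (2 * k)) := by
    rw [covariates, covariates, inputGram_two_mul A B heven hodd, powGram, powGram, powGram,
      ← sum_range_add_sum_Ico _ (by omega : k ≤ 2 * k), smul_add]
    abel
  rw [hsplit]
  exact lamMin_le_lamMin_add (posSemidef_covariates A B σ k U)
    ((posSemidef_powGram _ _).smul (sq_nonneg σ))

end Doubling

section Excitation

variable {d p : ℕ}

theorem feas'_zero (k : ℕ) (γ : ℝ) : Feas' p k γ 0 :=
  ⟨⟨0, fun ℓ _ j => by simp⟩, by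
    simp only [enormC, Pi.zero_apply, norm_zero, ne_eq, OfNat.ofNat_ne_zero, not_false_eq_true,
      zero_pow, sum_const_zero, Real.sqrt_zero]
    positivity⟩

theorem Psi_le {A : Matrix (Fin d) (Fin d) ℝ} {B : Matrix (Fin d) (Fin p) ℝ} {σ γ C : ℝ} {k : ℕ}
    (h : ∀ r ∈ excitationSet A B σ γ k, r ≤ C) : Psi A B σ γ k ≤ C := by
  rw [Psi_eq_sSup_excitationSet]
  exact csSup_le ⟨_, 0, feas'_zero k γ, rfl⟩ h

theorem Psi_le_Psi_two_mul [NeZero d] (A : Matrix (Fin d) (Fin d) ℝ)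
    (B : Matrix (Fin d) (Fin p) ℝ) (σ γ : ℝ) {k : ℕ} (hk : k ≠ 0)
    (hbdd : BddAbove (excitationSet A B σ γ (2 * k))) :
    Psi A B σ γ k ≤ Psi A B σ γ (2 * k) := by
  refine Psi_le ?_
  rintro _ ⟨U, hU, rfl⟩
  obtain ⟨U', hU', heven, hodd⟩ := hU.exists_two_mul hk
  rw [Psi_eq_sSup_excitationSet]
  exact le_csSup_of_le hbdd ⟨U', hU', rfl⟩ (lamMin_covariates_le_two_mul A B σ heven hodd)

theorem exists_forall_mem_excitationSet_le [NeZero d] (A : Matrix (Fin d) (Fin d) ℝ)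
    (hA : spectralRadius ℂ (cmap A) < 1) (B : Matrix (Fin d) (Fin p) ℝ) (σ γ : ℝ) :
    ∃ K, ∀ k ≠ 0, ∀ r ∈ excitationSet A B σ γ k, r ≤ K := by
  obtain ⟨C, hC⟩ := exists_norm_transfer_le A hA B
  refine ⟨σ ^ 2 * ∑' s, ‖cmap A ^ s‖ ^ 2 + C ^ 2 * γ ^ 2, ?_⟩
  rintro k hk _ ⟨U, hU, rfl⟩
  calc lamMin (covariates A B σ k U) ≤ (covariates A B σ k U 0 0).re :=
        lamMin_le_re_apply_self (posSemidef_covariates A B σ k U) 0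
    _ ≤ σ ^ 2 * ∑ s ∈ range k, ‖cmap A ^ s‖ ^ 2 + C ^ 2 * γ ^ 2 :=
        re_covariates_apply_self_le σ hk (fun ℓ _ => hC k ℓ) hU 0
    _ ≤ _ := by
        gcongr
        exact (summable_norm_pow_sq_of_spectralRadius_lt_one hA).sum_le_tsum _
          fun _ _ => by positivity

end Excitation

theorem stmt18_general {d p : ℕ} (hd : 1 ≤ d) (σ γ : ℝ)
    (A : Matrix (Fin d) (Fin d) ℝ)
    (hρ : ∀ μ ∈ spectrum ℂ (cmap A), ‖μ‖ < 1)
    (B : Matrix (Fin d) (Fin p) ℝ) (k₀ : ℕ) (hk₀ : 1 ≤ k₀) :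
    ∃ c : ℝ, Filter.Tendsto (fun i : ℕ => Psi A B σ γ (k₀ * 2 ^ i))
      Filter.atTop (nhds c) := by
  have : NeZero d := ⟨by omega⟩
  have hA : spectralRadius ℂ (cmap A) < 1 := by
    simpa using spectrum.spectralRadius_lt_of_forall_lt (cmap A) (r := 1) fun μ hμ => by
      simpa [← NNReal.coe_lt_coe] using hρ μ hμ
  obtain ⟨K, hK⟩ := exists_forall_mem_excitationSet_le A hA B σ γ
  have hk (i : ℕ) : k₀ * 2 ^ i ≠ 0 := mul_ne_zero (by omega) (by positivity)
  have hmono : Monotone fun i => Psi A B σ γ (k₀ * 2 ^ i) := monotone_nat_of_le_succ fun i => by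
    rw [pow_succ, ← mul_assoc, mul_comm _ 2]
    exact Psi_le_Psi_two_mul A B σ γ (hk i) ⟨K, hK _ (by simpa using hk i)⟩
  exact ⟨_, tendsto_atTop_ciSup hmono ⟨K, Set.forall_mem_range.2 fun i => Psi_le (hK _ (hk i))⟩⟩

/-- **Existence of the limiting optimal excitation level.**  For any `k₀ ≥ 1`, the sequence
`i ↦ Ψ(k₀·2^i)` converges to a finite limit. -/
theorem stmt18 {d p : ℕ} (hd : 1 ≤ d) (hp : 1 ≤ p) (σ γ : ℝ) (hσ : 0 ≤ σ) (hγ : 0 < γ)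
    (A : Matrix (Fin d) (Fin d) ℝ)
    (hρ : ∀ μ ∈ spectrum ℂ (cmap A), ‖μ‖ < 1)
    (B : Matrix (Fin d) (Fin p) ℝ) (k₀ : ℕ) (hk₀ : 1 ≤ k₀) :
    ∃ c : ℝ, Filter.Tendsto (fun i : ℕ => Psi A B σ γ (k₀ * 2 ^ i))
      Filter.atTop (nhds c) :=
  stmt18_general hd σ γ A hρ B k₀ hk₀
end
end
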